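/- arXiv:1702.05705 — 6 statements merged into one kernel-verified Lean document; each statement's English description precedes it below -/
import Mathlib

section
/- For every nonzero element v of the field F_8 with v ≠ 1, the trace map tr: F_8 → F_2 (defined by tr(x) = x + x^2 + x^4) satisfies tr(v + v^{-1}) = 1. -/
/-!
Since `F_8^×` is cyclic of order 7, `v⁻¹ = v⁶`, and Frobenius gives
`tr (v + v⁻¹) = (v + v² + v⁴) + (v⁶ + v⁵ + v³)`. For `v ≠ 1` this is `∑_{i=1}^{6} vⁱ = -1 = 1`,
because `v` is a root of `1 + X + ⋯ + X⁶ = (X⁷ - 1) / (X - 1)`.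
-/

open scoped Classical
noncomputable section

abbrev F8 := GaloisField 2 3

def tr (x : F8) : F8 := x + x ^ 2 + x ^ 4

theorem add_inv_add_sq_add_pow_four_eq_one {K : Type*} [Field K] [CharP K 2] {v : K}
    (h7 : v ^ 7 = 1) (hv1 : v ≠ 1) :
    (v + v⁻¹) + (v + v⁻¹) ^ 2 + (v + v⁻¹) ^ 4 = 1 := by
  have hgeom : ∑ i ∈ Finset.range 7, v ^ i = 0 := by
    rw [geom_sum_eq hv1, h7, sub_self, zero_div]
  have hinv : v⁻¹ = v ^ 6 := inv_eq_of_mul_eq_one_right (by rw [← pow_succ', h7])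
  have hsq : (v + v⁻¹) ^ 2 = v ^ 2 + v ^ 5 := by
    rw [CharTwo.add_sq, hinv]
    linear_combination v ^ 5 * h7
  have hfour : (v + v⁻¹) ^ 4 = v ^ 4 + v ^ 3 := by
    rw [show 4 = 2 * 2 from rfl, pow_mul, hsq, CharTwo.add_sq]
    linear_combination v ^ 3 * h7
  simp only [Finset.sum_range_succ, Finset.sum_range_zero] at hgeom
  rw [hsq, hfour, hinv]
  linear_combination hgeom - CharTwo.two_eq_zero (R := K)

theorem F8.pow_seven_eq_one {v : F8} (hv : v ≠ 0) : v ^ 7 = 1 := by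
  let _ : Fintype F8 := Fintype.ofFinite F8
  have hcard : Fintype.card F8 = 8 := by
    rw [Fintype.card_eq_nat_card, GaloisField.card 2 3 three_ne_zero]
    rfl
  simpa [hcard] using FiniteField.pow_card_sub_one_eq_one v hv

theorem trace_of_v_add_inv (v : F8) (hv : v ≠ 0) (hv1 : v ≠ 1) :
    tr (v + v⁻¹) = 1 :=
  add_inv_add_sq_add_pow_four_eq_one (F8.pow_seven_eq_one hv) hv1
end
end

section
/- Define φ: F_8 × F_8 → F_2 by φ(x,y) = tr(y·x^6). Then for all x, y ∈ F_8, φ(x,y) + φ(y,x) = 1 if x and y are F_2-linearly independent (i.e., x ≠ 0, y ≠ 0, and x ≠ y), and φ(x,y) + φ(y,x) = 0 otherwise. -/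
/-!
Every nonzero `x ∈ 𝔽₈` satisfies `x ^ 7 = 1`, so `x ^ 6 = x⁻¹` and `φ x y = tr (y / x)`.
Hence `φ x y + φ y x = tr t + tr t⁻¹` with `t = y / x`. Reducing exponents modulo 7,
`tr t + tr (t ^ 6) = t + t ^ 2 + ⋯ + t ^ 6 = 1 + (1 + t + ⋯ + t ^ 6)`, and the geometric sum
vanishes unless `t = 1`.
-/

open scoped Classical
noncomputable section

def φ (x y : F8) : F8 := tr (y * x ^ 6)

lemma pow_seven_eq_one {x : F8} (hx : x ≠ 0) : x ^ 7 = 1 := by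
  have := Fintype.ofFinite F8
  have hcard : Fintype.card F8 = 8 := by
    rw [Fintype.card_eq_nat_card, GaloisField.card 2 3 three_ne_zero]; rfl
  simpa [hcard] using FiniteField.pow_card_sub_one_eq_one x hx

lemma pow_six_eq_inv (x : F8) : x ^ 6 = x⁻¹ := by
  rcases eq_or_ne x 0 with rfl | hx
  · simp
  · exact eq_inv_of_mul_eq_one_left (by rw [← pow_succ, pow_seven_eq_one hx])

lemma phi_eq_tr_div (x y : F8) : φ x y = tr (y / x) := by
  rw [φ, pow_six_eq_inv, div_eq_mul_inv]

lemma tr_add_tr_inv (t : F8) : tr t + tr t⁻¹ = if t ≠ 0 ∧ t ≠ 1 then 1 else 0 := by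
  rcases eq_or_ne t 0 with rfl | ht0
  · simp [tr]
  rcases eq_or_ne t 1 with rfl | ht1
  · simp [CharTwo.add_self_eq_zero]
  rw [if_pos ⟨ht0, ht1⟩, ← pow_six_eq_inv]
  have h7 := pow_seven_eq_one ht0
  have hgeom : ∑ i ∈ Finset.range 7, t ^ i = 0 := by
    rw [geom_sum_eq ht1, h7, sub_self, zero_div]
  simp only [Finset.sum_range_succ, Finset.sum_range_zero] at hgeom
  unfold tr
  linear_combination hgeom + (t ^ 5 + t ^ 3 * (t ^ 14 + t ^ 7 + 1)) * h7
    - CharTwo.two_eq_zero (R := F8)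

theorem phi_add_phi_swap (x y : F8) :
    φ x y + φ y x = if x ≠ 0 ∧ y ≠ 0 ∧ x ≠ y then 1 else 0 := by
  have hcond : y / x ≠ 0 ∧ y / x ≠ 1 ↔ x ≠ 0 ∧ y ≠ 0 ∧ x ≠ y := by
    rcases eq_or_ne x 0 with rfl | hx
    · simp
    · simp [hx, div_eq_one_iff_eq, eq_comm]
  rw [phi_eq_tr_div, phi_eq_tr_div, ← inv_div y x, tr_add_tr_inv]
  simp_rw [hcond]
end
end

section
/- Define φ: F_8 × F_8 → F_2 by φ(x,y) = tr(y·x^6). Then the coboundary δφ(x,y,z) = φ(y,z) + φ(x+y,z) + φ(x,y+z) + φ(x,y) equals 1 if x, y, z are F_2-linearly independent in F_8 (viewed as a 3-dimensional F_2-vector space) and equals 0 otherwise. -/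
/-!
Over `F₂`, `δφ(x, y, z) = tr(z (x⁴y² + x²y⁴))` is trilinear, since squaring is additive in
characteristic 2. As `tr` is invariant under Frobenius, it also vanishes when `z = x` or `z = y`,
so it is an alternating form, and it is nonzero by nondegeneracy of the trace. A nonzero
alternating trilinear form on the 3-dimensional `F₂`-space `F₈` vanishes exactly on dependent
triples and takes the value `1` on the independent ones.
-/

open scoped Classical
noncomputable section


theorem Algebra.trace_pow_card {K L : Type*} [Field K] [Fintype K] [Field L] [Algebra K L]
    [Algebra.IsAlgebraic K L] (x : L) :
    Algebra.trace K L (x ^ Fintype.card K) = Algebra.trace K L x :=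
  Algebra.trace_eq_of_algEquiv (FiniteField.frobeniusAlgEquivOfAlgebraic K L) x

namespace F8

local notation "Tr" => Algebra.trace (ZMod 2) F8

theorem pow_eight (a : F8) : a ^ 8 = a := by
  let := Fintype.ofFinite F8
  have hcard : Fintype.card F8 = 8 := by
    rw [Fintype.card_eq_nat_card, GaloisField.card 2 3 (by norm_num)]; rfl
  simpa [hcard] using FiniteField.pow_card a

theorem exists_ne_zero_ne_one : ∃ y : F8, y ≠ 0 ∧ y ≠ 1 := by
  obtain ⟨y, hy⟩ := Finset.exists_not_mem_of_card_lt_enatCard (s := ({0, 1} : Finset F8)) (by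
    rw [ENat.card_eq_coe_natCard, GaloisField.card 2 3 (by norm_num)]
    exact_mod_cast Finset.card_le_two.trans_lt (by norm_num))
  exact ⟨y, by simpa [not_or] using hy⟩

theorem algebraMap_trace (a : F8) : algebraMap (ZMod 2) F8 (Tr a) = tr a := by
  rw [FiniteField.algebraMap_trace_eq_sum_pow, GaloisField.finrank 2 (by norm_num), Nat.card_zmod]
  simp [Finset.sum_range_succ, tr]

theorem trace_sq (a : F8) : Tr (a ^ 2) = Tr a := by
  simpa using Algebra.trace_pow_card (K := ZMod 2) a

/-- Both summands have the same trace as `x⁶ y`, being its images under Frobenius. -/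
theorem trace_mul_cross_self (x y : F8) : Tr (x * (x ^ 4 * y ^ 2 + x ^ 2 * y ^ 4)) = 0 := by
  have h5 : Tr (x ^ 5 * y ^ 2) = Tr (x ^ 6 * y) := by
    calc Tr (x ^ 5 * y ^ 2) = Tr (((x ^ 5 * y ^ 2) ^ 2) ^ 2) := by rw [trace_sq, trace_sq]
      _ = Tr (x ^ 6 * y) := by
        congr 1
        linear_combination (x ^ 12 + x ^ 5) * y ^ 8 * pow_eight x + x ^ 6 * pow_eight y
  have h3 : Tr (x ^ 3 * y ^ 4) = Tr (x ^ 6 * y) := by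
    calc Tr (x ^ 3 * y ^ 4) = Tr ((x ^ 3 * y ^ 4) ^ 2) := (trace_sq _).symm
      _ = Tr (x ^ 6 * y) := by
        congr 1
        linear_combination x ^ 6 * pow_eight y
  rw [mul_add, ← mul_assoc, ← mul_assoc, ← pow_succ', ← pow_succ', map_add, h5, h3,
    CharTwo.add_self_eq_zero]

theorem trace_mul_cross_eq_zero {x y z : F8} (h : x = y ∨ z = x ∨ z = y) :
    Tr (z * (x ^ 4 * y ^ 2 + x ^ 2 * y ^ 4)) = 0 := by
  rcases h with rfl | rfl | rfl
  · rw [← pow_add, ← pow_add, CharTwo.add_self_eq_zero, mul_zero, map_zero]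
  · exact trace_mul_cross_self z y
  · convert trace_mul_cross_self z x using 2
    ring

def coboundaryForm : F8 [⋀^Fin 3]→ₗ[ZMod 2] ZMod 2 where
  toFun v := Tr (v 2 * (v 0 ^ 4 * v 1 ^ 2 + v 0 ^ 2 * v 1 ^ 4))
  map_update_add' m i a b := by
    -- `simp` cannot evaluate `Function.update` through an arbitrary instance in the kernel
    obtain rfl := Subsingleton.elim ‹DecidableEq (Fin 3)› (instDecidableEqFin 3)
    rw [← map_add]
    congr 1
    fin_cases i <;> simp <;> grind
  map_update_smul' m i c a := by
    obtain rfl := Subsingleton.elim ‹DecidableEq (Fin 3)› (instDecidableEqFin 3)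
    rcases (by decide : ∀ c : ZMod 2, c = 0 ∨ c = 1) c with rfl | rfl <;>
      fin_cases i <;> simp
  map_eq_zero_of_eq' v i j hij hne := by
    apply trace_mul_cross_eq_zero
    fin_cases i <;> fin_cases j <;> grind

theorem coboundaryForm_ne_zero : coboundaryForm ≠ 0 := by
  obtain ⟨y, hy0, hy1⟩ := exists_ne_zero_ne_one
  have hcross : (y * (y + 1)) ^ 2 ≠ 0 :=
    pow_ne_zero 2 (mul_ne_zero hy0 (mt CharTwo.add_eq_zero.1 hy1))
  obtain ⟨z, hz⟩ : ∃ z, Tr ((y * (y + 1)) ^ 2 * z) ≠ 0 := by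
    by_contra! h
    exact hcross ((traceForm_nondegenerate (ZMod 2) F8).1 _ h)
  intro h
  have h1 : Tr (z * (1 ^ 4 * y ^ 2 + 1 ^ 2 * y ^ 4)) = 0 := DFunLike.congr_fun h ![1, y, z]
  exact hz (by rwa [show (y * (y + 1)) ^ 2 * z = z * (1 ^ 4 * y ^ 2 + 1 ^ 2 * y ^ 4) by grind])

theorem coboundaryForm_eq_one_of_linearIndependent {v : Fin 3 → F8}
    (hv : LinearIndependent (ZMod 2) v) : coboundaryForm v = 1 := by
  let e := basisOfLinearIndependentOfCardEqFinrank hv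
    (by simp [GaloisField.finrank 2 (by norm_num : 3 ≠ 0)])
  have he := (coboundaryForm.map_basis_ne_zero_iff e).2 coboundaryForm_ne_zero
  rw [coe_basisOfLinearIndependentOfCardEqFinrank] at he
  exact (by decide : ∀ c : ZMod 2, c ≠ 0 → c = 1) _ he

theorem coboundary_phi_eq (x y z : F8) :
    φ y z + φ (x + y) z + φ x (y + z) + φ x y =
      algebraMap (ZMod 2) F8 (coboundaryForm ![x, y, z]) := by
  change _ = algebraMap (ZMod 2) F8 (Tr (z * (x ^ 4 * y ^ 2 + x ^ 2 * y ^ 4)))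
  simp only [φ, ← algebraMap_trace, ← map_add]
  congr 2
  grind

end F8

theorem coboundary_phi_eq_ind (x y z : F8) :
    φ y z + φ (x + y) z + φ x (y + z) + φ x y =
      if LinearIndependent (ZMod 2) ![x, y, z] then 1 else 0 := by
  rw [F8.coboundary_phi_eq]
  split_ifs with h
  · rw [F8.coboundaryForm_eq_one_of_linearIndependent h, map_one]
  · rw [F8.coboundaryForm.map_linearDependent _ h, map_zero]
end
end

section
/- Let σ: F_8 × F_8 → {±1} be σ(x,y) = (-1)^{φ(x,y)} with φ(x,y) = tr(y·x^6), and let O be the 8-dimensional real algebra with basis {e^x : x ∈ F_8} and multiplication e^x · e^y = σ(x,y) e^{x+y}. For a = Σ a_x e^x define the conjugate a* = a_0 e^0 − Σ_{x≠0} a_x e^x. Then (ab)* = b* a* for all a, b ∈ O. -/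
open scoped Classical
noncomputable section

instance : Fintype F8 := Fintype.ofFinite F8

/-- The sign `(-1)^{φ(x,y)}` where `φ(x,y) = tr(y x⁶)`. -/
def sgn (x y : F8) : ℝ := if tr (y * x ^ 6) = 0 then 1 else -1

/-- Multiplication of the twisted group algebra `ℝ_σ[F₈]`, on coordinates:
octonions are functions `F8 → ℝ`, and `e^x e^y = (-1)^{tr(y x⁶)} e^{x+y}`. -/
def omul (a b : F8 → ℝ) : F8 → ℝ := fun z => ∑ x : F8, sgn x (z + x) * a x * b (z + x)

/-- The basis element `e^x`. -/
def e (x : F8) : F8 → ℝ := fun w => if w = x then 1 else 0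

/-- Octonion conjugation: `a* = Re(a) - Im(a)`. -/
def conj (a : F8 → ℝ) : F8 → ℝ := fun w => if w = 0 then a 0 else - a w

/-- The norm `N(a) = Σ aₓ²`. -/
def N (a : F8 → ℝ) : ℝ := ∑ x : F8, (a x) ^ 2


/-!
Conjugation fixes `e^0` and negates every other `e^x`. Comparing coefficients of `e^{x+y}`
in `(e^x e^y)^*` and `(e^y)^* (e^x)^*`, and using `y + y = 0`, the identity reduces to
`σ(0,x) = σ(x,0)` and to `σ(x,y) = -σ(y,x)` for distinct nonzero `x, y`. For the cocycle
of `F₈`, put `s = y x⁶ = y / x`; then `x y⁶ = s⁶ = s⁻¹`, and since `s⁷ = 1 ≠ s`,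
`tr s + tr s⁶ = s + s² + ⋯ + s⁶ = 1`. As `tr` takes values in `𝔽₂`, exactly one of the two
signs is `-1`.
-/

namespace TwistedGroupAlgebra

variable {G R : Type*} [AddCommGroup G] [Fintype G] [CommRing R]

def mul (σ : G → G → R) (a b : G → R) : G → R :=
  fun z => ∑ x : G, σ x (z + x) * a x * b (z + x)

def conj (a : G → R) : G → R := fun w => if w = 0 then a 0 else -a w

theorem mul_apply_eq_sum_swap (hG : ∀ x : G, x + x = 0) (σ : G → G → R) (a b : G → R) (w : G) :
    mul σ a b w = ∑ x : G, σ (w + x) x * a (w + x) * b x := by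
  refine Fintype.sum_equiv (Equiv.addLeft w) _ _ fun x => ?_
  simp only [Equiv.coe_addLeft, ← add_assoc, hG, zero_add]

theorem conj_mul (hG : ∀ x : G, x + x = 0) {σ : G → G → R} (hσ₀ : ∀ x, σ 0 x = σ x 0)
    (hσ : ∀ x y, x ≠ 0 → y ≠ 0 → x ≠ y → σ x y = -σ y x) (a b : G → R) :
    conj (mul σ a b) = mul σ (conj b) (conj a) := by
  funext w
  rw [mul_apply_eq_sum_swap hG]
  rcases eq_or_ne w 0 with rfl | hw
  · simp only [conj, if_true, mul, zero_add]
    refine Finset.sum_congr rfl fun x _ => ?_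
    split_ifs with hx
    · rw [hx]; ring
    · ring
  rw [conj, if_neg hw, mul, ← Finset.sum_neg_distrib]
  refine Finset.sum_congr rfl fun x _ => ?_
  rcases eq_or_ne x 0 with rfl | hx
  · simp only [add_zero, hσ₀, conj, hw, ↓reduceIte]
    ring
  rcases eq_or_ne x w with rfl | hxw
  · simp only [hG, hσ₀, conj, hw, ↓reduceIte]
    ring
  have hwx : w + x ≠ 0 := fun h => hxw (by rw [← add_right_inj x, add_comm x w, h, hG])
  have hwx' : w + x ≠ x := fun h => hw (by simpa using h)
  simp only [conj, if_neg hx, if_neg hwx, hσ x (w + x) hx hwx hwx'.symm]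
  ring

end TwistedGroupAlgebra

namespace F8

theorem card_eq : Fintype.card F8 = 8 := by
  rw [Fintype.card_eq_nat_card, GaloisField.card 2 3 (by norm_num)]
  norm_num

theorem pow_seven_eq_one_s7 {x : F8} (hx : x ≠ 0) : x ^ 7 = 1 := by
  simpa [card_eq] using FiniteField.pow_card_sub_one_eq_one x hx

end F8

theorem tr_eq_zero_or_one (x : F8) : tr x = 0 ∨ tr x = 1 := by
  have h8 : x ^ 8 = x := by simpa [F8.card_eq] using FiniteField.pow_card x
  have : tr x * (tr x - 1) = 0 := by
    unfold tr
    linear_combination h8 + (x ^ 3 + x ^ 5 + x ^ 6) * CharTwo.two_eq_zero (R := F8)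
  simpa [sub_eq_zero] using this

theorem tr_add_tr_pow_six {s : F8} (hs₀ : s ≠ 0) (hs₁ : s ≠ 1) : tr s + tr (s ^ 6) = 1 := by
  have h7 := F8.pow_seven_eq_one_s7 hs₀
  have hgeom : ∑ i ∈ Finset.range 7, s ^ i = 0 := by
    have := geom_sum_mul s 7
    rw [h7, sub_self] at this
    exact (mul_eq_zero.mp this).resolve_right (sub_ne_zero.mpr hs₁)
  simp only [Finset.sum_range_succ, Finset.sum_range_zero] at hgeom
  unfold tr
  linear_combination
    hgeom + (s ^ 5 + s ^ 3 * (s ^ 14 + s ^ 7 + 1)) * h7 - CharTwo.two_eq_zero (R := F8)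

theorem tr_mul_pow_six_add_tr_mul_pow_six {u v : F8} (hu : u ≠ 0) (hv : v ≠ 0) (huv : u ≠ v) :
    tr (v * u ^ 6) + tr (u * v ^ 6) = 1 := by
  have h7 := F8.pow_seven_eq_one_s7 hu
  have hs₁ : v * u ^ 6 ≠ 1 := fun h => huv (by linear_combination -u * h + v * h7)
  have hswap : u * v ^ 6 = (v * u ^ 6) ^ 6 := by
    linear_combination (-(v ^ 6 * u) * (u ^ 28 + u ^ 21 + u ^ 14 + u ^ 7 + 1)) * h7
  rw [hswap]
  exact tr_add_tr_pow_six (by positivity) hs₁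

theorem sgn_zero_comm (x : F8) : sgn 0 x = sgn x 0 := by
  simp [sgn, tr]

theorem sgn_antisymm {u v : F8} (hu : u ≠ 0) (hv : v ≠ 0) (huv : u ≠ v) : sgn u v = -sgn v u := by
  have h := tr_mul_pow_six_add_tr_mul_pow_six hu hv huv
  rcases tr_eq_zero_or_one (v * u ^ 6) with h₀ | h₁
  · rw [h₀, zero_add] at h
    simp [sgn, h₀, h]
  · have : tr (u * v ^ 6) = 0 := by linear_combination h - h₁
    simp [sgn, h₁, this]

theorem conj_omul (a b : F8 → ℝ) : conj (omul a b) = omul (conj b) (conj a) :=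
  TwistedGroupAlgebra.conj_mul CharTwo.add_self_eq_zero sgn_zero_comm
    (fun _ _ => sgn_antisymm) a b
end
end

section
/- Let O be the real algebra with basis {e^x : x ∈ F_8} and multiplication e^x e^y = (-1)^{tr(y x^6)} e^{x+y}. Then for all x, y, z ∈ F_8, (e^x e^y)e^z = e^x(e^y e^z) if x, y, z are F_2-linearly dependent, and (e^x e^y)e^z = −e^x(e^y e^z) if x, y, z are F_2-linearly independent. -/
/-! Write `e^x e^y = χ(y x⁶) e^{x+y}` with the additive character `χ t = (-1)^{tr t}`. Both
bracketings of `e^x e^y e^z` are `± e^{x+y+z}`, and since `(x+y)⁶ = x⁶ + y⁶ + q²` in characteristic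
2, with `q = x y (x+y)`, their signs differ by `χ(z q²)`. The form `D(x,y,z) = tr(z q²)` is
`F₂`-trilinear and alternating (`x q² = a + a²` with `a = x⁵y²`, and `tr(a + a²) = 0`), so it
vanishes on dependent triples. An independent triple spans `F₈`; if `D(x,y,z) = 0`, the linear
form `D(x,y,·)` would vanish on it, yet `D(x,y,q⁻²) = tr 1 = 1`. -/

open scoped Classical
noncomputable section

section CharTwo

variable {R : Type*} [CommRing R] [CharP R 2]

theorem sq_mul_mul_add_add_left (x x' y : R) :
    ((x + x') * y * (x + x' + y)) ^ 2 = (x * y * (x + y)) ^ 2 + (x' * y * (x' + y)) ^ 2 := by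
  linear_combination (norm := (ring_nf; reduce_mod_char!))

theorem sq_mul_mul_add_add_right (x y y' : R) :
    (x * (y + y') * (x + (y + y'))) ^ 2 = (x * y * (x + y)) ^ 2 + (x * y' * (x + y')) ^ 2 := by
  linear_combination (norm := (ring_nf; reduce_mod_char!))

end CharTwo

theorem pow_eight (a : F8) : a ^ 8 = a := by
  have hcard : Fintype.card F8 = 8 := by
    rw [← Nat.card_eq_fintype_card, GaloisField.card 2 3 three_ne_zero]; norm_num
  simpa [hcard] using FiniteField.pow_card a

theorem tr_zero : tr 0 = 0 := by simp [tr]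

theorem tr_one : tr 1 = 1 := by
  simp only [tr, one_pow, CharTwo.add_self_eq_zero, zero_add]

theorem tr_add (a b : F8) : tr (a + b) = tr a + tr b := by
  -- `reduce_mod_char!` reads the characteristic off a local hypothesis
  have : CharP F8 2 := inferInstance
  unfold tr
  linear_combination (norm := (ring_nf; reduce_mod_char!))

theorem tr_sq (a : F8) : tr (a ^ 2) = tr a := by
  unfold tr
  linear_combination pow_eight a

theorem sq_tr (a : F8) : tr a ^ 2 = tr (a ^ 2) := by
  have : CharP F8 2 := inferInstance
  unfold tr
  linear_combination (norm := (ring_nf; reduce_mod_char!))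

theorem tr_eq_zero_or_eq_one (a : F8) : tr a = 0 ∨ tr a = 1 :=
  IsIdempotentElem.iff_eq_zero_or_one.mp <| by rw [IsIdempotentElem, ← sq, sq_tr, tr_sq]

theorem tr_add_sq_self (a : F8) : tr (a + a ^ 2) = 0 := by
  rw [tr_add, tr_sq, CharTwo.add_self_eq_zero]

theorem tr_mul_sq_mul_mul_add_left (x y : F8) : tr (x * (x * y * (x + y)) ^ 2) = 0 := by
  have : CharP F8 2 := inferInstance
  have hsplit : x * (x * y * (x + y)) ^ 2 = x ^ 5 * y ^ 2 + (x ^ 5 * y ^ 2) ^ 2 := by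
    linear_combination (norm := (ring_nf; reduce_mod_char!)) (-(x ^ 2 * y ^ 4)) * pow_eight x
  rw [hsplit, tr_add_sq_self]

theorem tr_mul_sq_mul_mul_add_right (x y : F8) : tr (y * (x * y * (x + y)) ^ 2) = 0 := by
  rw [show x * y * (x + y) = y * x * (y + x) by ring, tr_mul_sq_mul_mul_add_left]

def trSign : AddChar F8 ℝ where
  toFun t := if tr t = 0 then 1 else -1
  map_zero_eq_one' := by simp [tr_zero]
  map_add_eq_mul' a b := by
    rcases tr_eq_zero_or_eq_one a with ha | ha <;> rcases tr_eq_zero_or_eq_one b with hb | hb <;>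
      simp [tr_add, ha, hb, CharTwo.add_self_eq_zero]

theorem sgn_eq_trSign (x y : F8) : sgn x y = trSign (y * x ^ 6) := rfl

theorem trSign_eq_one {t : F8} (ht : tr t = 0) : trSign t = 1 := if_pos ht

theorem trSign_eq_neg_one {t : F8} (ht : tr t ≠ 0) : trSign t = -1 := if_neg ht

theorem sgn_mul_sgn_add (x y z : F8) :
    sgn x y * sgn (x + y) z = trSign (z * (x * y * (x + y)) ^ 2) * sgn y z * sgn x (y + z) := by
  have : CharP F8 2 := inferInstance
  simp only [sgn_eq_trSign, ← AddChar.map_add_eq_mul]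
  congr 1
  linear_combination (norm := (ring_nf; reduce_mod_char!))

def associatorForm : F8 [⋀^Fin 3]→ₗ[ZMod 2] F8 where
  toFun v := tr (v 2 * (v 0 * v 1 * (v 0 + v 1)) ^ 2)
  map_update_add' := by
    intro inst v i a b
    -- `simp` can evaluate `Function.update` on `Fin 3` only with the computable instance
    obtain rfl : inst = instDecidableEqFin 3 := Subsingleton.elim _ _
    fin_cases i <;>
      simp only [Function.update_self, Function.update_of_ne, ne_eq, Fin.reduceEq,
        not_false_eq_true, Fin.zero_eta, Fin.mk_one, Fin.reduceFinMk, ← tr_add]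
    · rw [sq_mul_mul_add_add_left, mul_add]
    · rw [sq_mul_mul_add_add_right, mul_add]
    · rw [add_mul]
  map_update_smul' := by
    intro inst v i c a
    obtain rfl : inst = instDecidableEqFin 3 := Subsingleton.elim _ _
    obtain rfl | rfl : c = 0 ∨ c = 1 := by fin_cases c; exacts [Or.inl rfl, Or.inr rfl]
    all_goals fin_cases i <;> simp [tr_zero]
  map_eq_zero_of_eq' v i j hij hne := by
    fin_cases i <;> fin_cases j <;> simp at hij hne ⊢ <;>
      simp [hij, CharTwo.add_self_eq_zero, tr_zero, tr_mul_sq_mul_mul_add_left,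
        tr_mul_sq_mul_mul_add_right]

theorem associatorForm_apply (x y z : F8) :
    associatorForm ![x, y, z] = tr (z * (x * y * (x + y)) ^ 2) := rfl

theorem associatorForm_ne_zero_of_linearIndependent {x y z : F8}
    (h : LinearIndependent (ZMod 2) ![x, y, z]) : associatorForm ![x, y, z] ≠ 0 := by
  have hq : x * y * (x + y) ≠ 0 := by
    refine mul_ne_zero (mul_ne_zero (h.ne_zero 0) (h.ne_zero 1)) ?_
    exact CharTwo.add_eq_zero.not.mpr (h.injective.ne (by decide : (0 : Fin 3) ≠ 1))
  let ℓ := associatorForm.toMultilinearMap.toLinearMap ![x, y, z] 2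
  have hℓ (w : F8) : ℓ w = tr (w * (x * y * (x + y)) ^ 2) := rfl
  have hspan : Submodule.span (ZMod 2) (Set.range ![x, y, z]) = ⊤ :=
    h.span_eq_top_of_card_eq_finrank (by simp [GaloisField.finrank 2 three_ne_zero])
  intro hxyz
  have hℓ_zero : ℓ = 0 := LinearMap.ext_on_range hspan fun i => by
    fin_cases i
    · exact tr_mul_sq_mul_mul_add_left x y
    · exact tr_mul_sq_mul_mul_add_right x y
    · exact hxyz
  have h_one := hℓ ((x * y * (x + y)) ^ 2)⁻¹
  rw [hℓ_zero, inv_mul_cancel₀ (pow_ne_zero 2 hq), tr_one] at h_one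
  exact one_ne_zero h_one.symm

theorem omul_smul_left (c : ℝ) (a b : F8 → ℝ) : omul (c • a) b = c • omul a b := by
  ext w
  simp only [omul, Pi.smul_apply, smul_eq_mul, Finset.mul_sum]
  exact Finset.sum_congr rfl fun _ _ => by ring

theorem omul_smul_right (c : ℝ) (a b : F8 → ℝ) : omul a (c • b) = c • omul a b := by
  ext w
  simp only [omul, Pi.smul_apply, smul_eq_mul, Finset.mul_sum]
  exact Finset.sum_congr rfl fun _ _ => by ring

theorem omul_e_left (x : F8) (b : F8 → ℝ) (w : F8) :
    omul (e x) b w = sgn x (w + x) * b (w + x) := by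
  simp [omul, e]

theorem omul_e_e (x y : F8) : omul (e x) (e y) = sgn x y • e (x + y) := by
  ext w
  have hshift : w + x = y ↔ w = x + y := by
    rw [← eq_sub_iff_add_eq, CharTwo.sub_eq_add, add_comm]
  simp only [omul_e_left, e, hshift, Pi.smul_apply, smul_eq_mul, mul_ite, mul_one, mul_zero]
  split_ifs with hw
  · rw [hshift.mpr hw]
  · rfl

theorem omul_e_e_e (x y z : F8) :
    omul (omul (e x) (e y)) (e z) =
      trSign (z * (x * y * (x + y)) ^ 2) • omul (e x) (omul (e y) (e z)) := by
  rw [omul_e_e, omul_smul_left, omul_e_e, omul_e_e, omul_smul_right, omul_e_e, smul_smul,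
    smul_smul, smul_smul, add_assoc, sgn_mul_sgn_add]

theorem basis_associativity (x y z : F8) :
    (¬ LinearIndependent (ZMod 2) ![x, y, z] →
      omul (omul (e x) (e y)) (e z) = omul (e x) (omul (e y) (e z))) ∧
    (LinearIndependent (ZMod 2) ![x, y, z] →
      omul (omul (e x) (e y)) (e z) = - omul (e x) (omul (e y) (e z))) := by
  refine ⟨fun h => ?_, fun h => ?_⟩
  · have hD := associatorForm.map_linearDependent _ h
    rw [associatorForm_apply] at hD
    rw [omul_e_e_e, trSign_eq_one hD, one_smul]
  · have hD := associatorForm_ne_zero_of_linearIndependent h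
    rw [associatorForm_apply] at hD
    rw [omul_e_e_e, trSign_eq_neg_one hD, neg_one_smul]
end
end

section
/- Consider the translation action of the additive group of F_8 on the set of 4-element subsets of F_8. A 4-element subset X ⊆ F_8 has nontrivial stabilizer under this action if and only if X is a line (a translate of a set {0, x, y, x+y} with x, y nonzero and distinct) or the complement of a line. Equivalently: X has nontrivial stabilizer if and only if Σ_{x∈X} x = 0. -/
open scoped Classical
noncomputable section

lemma F8.add_self (x : F8) : x + x = 0 := CharTwo.add_self_eq_zero x

lemma F8.two_eq_zero : (2 : F8) = 0 := by
  rw [show (2 : F8) = 1 + 1 by norm_num]; exact F8.add_self 1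

lemma F8.card : Fintype.card F8 = 8 := by
  rw [← Nat.card_eq_fintype_card, GaloisField.card 2 3 (by norm_num)]; norm_num

lemma F8.sum_univ : ∑ x : F8, x = 0 := by
  obtain ⟨u, hu0, hu1⟩ : ∃ u : F8, u ≠ 0 ∧ u ≠ 1 := by
    by_contra h
    push_neg at h
    have hsub : (Finset.univ : Finset F8) ⊆ {0, 1} := by
      intro x _
      by_cases hx : x = 0
      · simp [hx]
      · simp [h x hx]
    have := Finset.card_le_card hsub
    rw [Finset.card_univ, F8.card] at this
    have h2 : ({0, 1} : Finset F8).card ≤ 2 := by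
      apply (Finset.card_insert_le _ _).trans; simp
    omega
  have key : ∑ x : F8, u * x = ∑ x : F8, x :=
    Fintype.sum_bijective (fun x => u * x) (mulLeft_bijective₀ u hu0)
      (fun x => u * x) id (fun x => rfl)
  rw [← Finset.mul_sum] at key
  by_contra hS
  exact hu1 (mul_right_cancel₀ hS (by rw [key, one_mul]))

lemma F8.linIndep_iff (a b : F8) :
    LinearIndependent (ZMod 2) ![a, b] ↔ a ≠ 0 ∧ b ≠ 0 ∧ a ≠ b := by
  rw [LinearIndependent.pair_iff]
  have hZ : ∀ s : ZMod 2, s = 0 ∨ s = 1 := by decide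
  constructor
  · intro h
    refine ⟨fun ha => ?_, fun hb => ?_, fun hab => ?_⟩
    · exact one_ne_zero ((h 1 0 (by simp [ha])).1)
    · exact one_ne_zero ((h 0 1 (by simp [hb])).2)
    · exact one_ne_zero ((h 1 1 (by simp [hab, F8.add_self b])).1)
  · rintro ⟨ha, hb, hab⟩ s t hst
    rcases hZ s with rfl | rfl <;> rcases hZ t with rfl | rfl
    · exact ⟨rfl, rfl⟩
    · rw [zero_smul, one_smul, zero_add] at hst; exact absurd hst hb
    · rw [one_smul, zero_smul, add_zero] at hst; exact absurd hst ha
    · rw [one_smul, one_smul] at hst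
      exact absurd (show a = b by linear_combination hst - b * F8.two_eq_zero) hab

lemma F8.sum_of_stab (X : Finset F8) (hX : X.card = 4) (z : F8) (hz : z ≠ 0)
    (him : X.image (fun x => z + x) = X) : ∑ x ∈ X, x = 0 := by
  have hmem : ∀ x ∈ X, z + x ∈ X := by
    intro x hx
    rw [← him]
    exact Finset.mem_image_of_mem _ hx
  obtain ⟨a, ha⟩ : X.Nonempty := Finset.card_pos.mp (by omega)
  have hza : z + a ≠ a := fun h => hz (by linear_combination h)
  obtain ⟨b, hb⟩ : (X \ {a, z + a}).Nonempty := by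
    rw [← Finset.card_pos]
    have h1 : ({a, z + a} : Finset F8).card ≤ 2 := by
      apply (Finset.card_insert_le _ _).trans; simp
    have := Finset.le_card_sdiff ({a, z + a}) X
    omega
  rw [Finset.mem_sdiff, Finset.mem_insert, Finset.mem_singleton] at hb
  push_neg at hb
  obtain ⟨hbX, hba, hbza⟩ := hb
  have hzb : z + b ≠ b := fun h => hz (by linear_combination h)
  have hzba : z + b ≠ a := fun h => hbza (by linear_combination h - z * F8.two_eq_zero)
  have hzbza : z + b ≠ z + a := fun h => hba (by linear_combination h)
  have hsub : ({a, z + a, b, z + b} : Finset F8) ⊆ X := by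
    intro x hx
    simp only [Finset.mem_insert, Finset.mem_singleton] at hx
    rcases hx with rfl | rfl | rfl | rfl
    · exact ha
    · exact hmem a ha
    · exact hbX
    · exact hmem b hbX
  have hcard : ({a, z + a, b, z + b} : Finset F8).card = 4 := by
    rw [Finset.card_insert_of_notMem (by simp [hza.symm, Ne.symm hba, Ne.symm hzba]),
      Finset.card_insert_of_notMem (by simp [Ne.symm hbza, Ne.symm hzbza]),
      Finset.card_insert_of_notMem (by simp [Ne.symm hzb]),
      Finset.card_singleton]
  have hXeq : X = {a, z + a, b, z + b} :=
    (Finset.eq_of_subset_of_card_le hsub (by omega)).symm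
  rw [hXeq, Finset.sum_insert (by simp [hza.symm, Ne.symm hba, Ne.symm hzba]),
    Finset.sum_insert (by simp [Ne.symm hbza, Ne.symm hzbza]),
    Finset.sum_insert (by simp [Ne.symm hzb]), Finset.sum_singleton]
  linear_combination (a + b + z) * F8.two_eq_zero

lemma F8.stab_of_sum (X : Finset F8) (hX : X.card = 4) (hs : ∑ x ∈ X, x = 0) :
    ∃ z : F8, z ≠ 0 ∧ X.image (fun x => z + x) = X := by
  obtain ⟨a, ha⟩ : X.Nonempty := Finset.card_pos.mp (by omega)
  have h3 : (X.erase a).card = 3 := by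
    rw [Finset.card_erase_of_mem ha, hX]
  obtain ⟨b, c, d, hbc, hbd, hcd, herase⟩ := Finset.card_eq_three.mp h3
  have hXeq : X = {a, b, c, d} := by
    rw [← Finset.insert_erase ha, herase]
  have hab : a ≠ b := fun h => (Finset.ne_of_mem_erase (herase ▸ (by simp : b ∈ ({b,c,d} : Finset F8)))) h.symm
  have hac : a ≠ c := fun h => (Finset.ne_of_mem_erase (herase ▸ (by simp : c ∈ ({b,c,d} : Finset F8)))) h.symm
  have had : a ≠ d := fun h => (Finset.ne_of_mem_erase (herase ▸ (by simp : d ∈ ({b,c,d} : Finset F8)))) h.symm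
  have hsum : a + b + c + d = 0 := by
    rw [hXeq, Finset.sum_insert (by simp [hab, hac, had]),
      Finset.sum_insert (by simp [hbc, hbd]),
      Finset.sum_insert (by simp [hcd]), Finset.sum_singleton] at hs
    linear_combination hs
  refine ⟨a + b, fun h => hab (by linear_combination h - b * F8.two_eq_zero), ?_⟩
  have e1 : a + b + a = b := by linear_combination a * F8.two_eq_zero
  have e2 : a + b + b = a := by linear_combination b * F8.two_eq_zero
  have e3 : a + b + c = d := by linear_combination hsum - d * F8.two_eq_zero
  have e4 : a + b + d = c := by linear_combination hsum - c * F8.two_eq_zero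
  rw [hXeq]
  simp only [Finset.image_insert, Finset.image_singleton, e1, e2, e3, e4]
  ext x
  simp only [Finset.mem_insert, Finset.mem_singleton]
  tauto

lemma F8.line_of (Y : Finset F8) (h4 : Y.card = 4) (h0 : (0 : F8) ∈ Y)
    (hs : ∑ x ∈ Y, x = 0) :
    ∃ a b : F8, LinearIndependent (ZMod 2) ![a, b] ∧ Y = {0, a, b, a + b} := by
  have h3 : (Y.erase 0).card = 3 := by
    rw [Finset.card_erase_of_mem h0, h4]
  obtain ⟨a, b, c, hab, hac, hbc, herase⟩ := Finset.card_eq_three.mp h3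
  have hYeq : Y = {0, a, b, c} := by
    rw [← Finset.insert_erase h0, herase]
  have ha0 : a ≠ 0 := Finset.ne_of_mem_erase (herase ▸ (by simp : a ∈ ({a,b,c} : Finset F8)))
  have hb0 : b ≠ 0 := Finset.ne_of_mem_erase (herase ▸ (by simp : b ∈ ({a,b,c} : Finset F8)))
  have hc0 : c ≠ 0 := Finset.ne_of_mem_erase (herase ▸ (by simp : c ∈ ({a,b,c} : Finset F8)))
  have hsum : a + b + c = 0 := by
    rw [hYeq, Finset.sum_insert (by simp [Ne.symm ha0, Ne.symm hb0, Ne.symm hc0]),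
      Finset.sum_insert (by simp [hab, hac]),
      Finset.sum_insert (by simp [hbc]), Finset.sum_singleton] at hs
    linear_combination hs
  have hcab : c = a + b := by linear_combination hsum - (a + b) * F8.two_eq_zero
  exact ⟨a, b, (F8.linIndep_iff a b).mpr ⟨ha0, hb0, hab⟩, by rw [hYeq, hcab]⟩

lemma F8.line_sum (a b : F8) (h : LinearIndependent (ZMod 2) ![a, b]) :
    ∑ x ∈ ({0, a, b, a + b} : Finset F8), x = 0 := by
  obtain ⟨ha0, hb0, hab⟩ := (F8.linIndep_iff a b).mp h
  have hab0 : a + b ≠ 0 := fun h => hab (by linear_combination h - b * F8.two_eq_zero)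
  have haab : a ≠ a + b := fun h => hb0 (by linear_combination -h)
  have hbab : b ≠ a + b := fun h => ha0 (by linear_combination -h)
  rw [Finset.sum_insert (by simp [Ne.symm ha0, Ne.symm hb0, Ne.symm hab0]),
    Finset.sum_insert (by simp [hab, haab]),
    Finset.sum_insert (by simp [hbab]), Finset.sum_singleton]
  linear_combination (a + b) * F8.two_eq_zero

theorem nontrivial_stabilizer_iff (X : Finset F8) (hX : X.card = 4) :
    ((∃ z : F8, z ≠ 0 ∧ X.image (fun x => z + x) = X) ↔
      ∃ a b : F8, LinearIndependent (ZMod 2) ![a, b] ∧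
        (X = {0, a, b, a + b} ∨ X = ({0, a, b, a + b} : Finset F8)ᶜ)) ∧
    ((∃ z : F8, z ≠ 0 ∧ X.image (fun x => z + x) = X) ↔ ∑ x ∈ X, x = 0) := by
  have iff2 : (∃ z : F8, z ≠ 0 ∧ X.image (fun x => z + x) = X) ↔ ∑ x ∈ X, x = 0 := by
    constructor
    · rintro ⟨z, hz, him⟩
      exact F8.sum_of_stab X hX z hz him
    · exact F8.stab_of_sum X hX
  refine ⟨iff2.trans ?_, iff2⟩
  constructor
  · intro hs
    by_cases h0 : (0 : F8) ∈ X
    · obtain ⟨a, b, hli, hYeq⟩ := F8.line_of X hX h0 hs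
      exact ⟨a, b, hli, Or.inl hYeq⟩
    · have hcard : Xᶜ.card = 4 := by
        rw [Finset.card_compl, F8.card, hX]
      have h0c : (0 : F8) ∈ Xᶜ := by simp [h0]
      have hsc : ∑ x ∈ Xᶜ, x = 0 := by
        have h := Finset.sum_add_sum_compl X (fun x => x)
        rw [F8.sum_univ, hs, zero_add] at h
        exact h
      obtain ⟨a, b, hli, hYeq⟩ := F8.line_of Xᶜ hcard h0c hsc
      exact ⟨a, b, hli, Or.inr (by rw [← hYeq, compl_compl])⟩
  · rintro ⟨a, b, hli, hXeq | hXeq⟩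
    · rw [hXeq]; exact F8.line_sum a b hli
    · have h := Finset.sum_add_sum_compl ({0, a, b, a + b} : Finset F8) (fun x => x)
      rw [F8.sum_univ, F8.line_sum a b hli, zero_add] at h
      rw [hXeq]; exact h
end
end
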